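/- Privacy against Charlie in HamDist (message sufficiency): with A^n := π(Z^n ⊗ (X^n ⊖ R^n)) and B^n := π(Z^n ⊗ (R^n ⊖ Y^n)), where R^n is uniform on F^n, Z^n is uniform on (F\{0})^n, π is uniform on permutations, and (R^n, Z^n, π) is independent of (X^n, Y^n), we have I(A^n, B^n; X^n, Y^n | d_H(X^n, Y^n)) = 0. -/

import Mathlib

/-- Probability mass of the event `A = a` under the weight function `p` on a
finite sample space. -/
def pmfOf {Ω α : Type*} [Fintype Ω] [DecidableEq α] (p : Ω → ℝ) (A : Ω → α) (a : α) : ℝ :=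
  ∑ ω, if A ω = a then p ω else 0

/-- Shannon entropy of the random variable `A`. -/
noncomputable def entH {Ω α : Type*} [Fintype Ω] [Fintype α] [DecidableEq α]
    (p : Ω → ℝ) (A : Ω → α) : ℝ :=
  ∑ a, Real.negMulLog (pmfOf p A a)

/-- Conditional mutual information `I(A ; X | B)`. -/
noncomputable def cmi {Ω α β γ : Type*} [Fintype Ω] [Fintype α] [Fintype β] [Fintype γ]
    [DecidableEq α] [DecidableEq β] [DecidableEq γ]
    (p : Ω → ℝ) (A : Ω → α) (X : Ω → β) (B : Ω → γ) : ℝ :=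
  entH p (fun ω => (A ω, B ω)) + entH p (fun ω => (X ω, B ω))
    - entH p (fun ω => (A ω, X ω, B ω)) - entH p B


/-! Given `(X, Y) = (x, y)`, the messages are the image of the independent coins `(R, Z, π)`
under a map depending on `(x, y)`, so their conditional law is the push-forward of the coin law.
That law does not change when `(x, y)` is replaced by `(x ∘ τ, y ∘ τ)` (substitute `π ↦ τ⁻¹ π`),
nor by any `(x', y')` with `x' - y' = k ⊗ (x - y)` for a nowhere-zero `k`
(substitute `R ↦ k ⊗ R + x' - k ⊗ x`, `Z ↦ Z ⊘ k`), and these two moves connect any two pairs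
at the same Hamming distance. So the messages are conditionally independent of `(X, Y)` given
`d_H(X, Y)`, and the conditional mutual information vanishes. -/

section Entropy

variable {Ω α β γ : Type*} [Fintype Ω] (p : Ω → ℝ)

theorem sum_pmfOf_mul [DecidableEq α] [Fintype α] (A : Ω → α) (φ : α → ℝ) :
    ∑ a, pmfOf p A a * φ a = ∑ ω, p ω * φ (A ω) := by
  simp only [pmfOf, Finset.sum_mul, ite_mul, zero_mul]
  rw [Finset.sum_comm]
  simp

theorem pmfOf_comp [DecidableEq α] [DecidableEq β] [Fintype α] (A : Ω → α) (f : α → β) (b : β) :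
    pmfOf p (fun ω => f (A ω)) b = ∑ a, if f a = b then pmfOf p A a else 0 := by
  have h := sum_pmfOf_mul p A fun a => if f a = b then (1 : ℝ) else 0
  simp only [mul_ite, mul_one, mul_zero] at h
  exact h.symm

theorem pmfOf_comp_of_injective [DecidableEq α] [DecidableEq β] (A : Ω → α) {f : α → β}
    (hf : f.Injective) (a : α) : pmfOf p (fun ω => f (A ω)) (f a) = pmfOf p A a := by
  simp only [pmfOf, hf.eq_iff]

theorem pmfOf_eq_zero_of_notMem_range [DecidableEq β] (A : Ω → α) {f : α → β} {b : β}
    (hb : b ∉ Set.range f) : pmfOf p (fun ω => f (A ω)) b = 0 :=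
  Finset.sum_eq_zero fun ω _ => if_neg fun h => hb ⟨A ω, h⟩

theorem sum_pmfOf_pair [DecidableEq α] [DecidableEq β] [Fintype α] (A : Ω → α) (W : Ω → β)
    (w : β) : ∑ a, pmfOf p (fun ω => (A ω, W ω)) (a, w) = pmfOf p W w := by
  simp only [pmfOf, Prod.mk.injEq, ite_and]
  rw [Finset.sum_comm]
  simp

theorem entH_comp_of_injective [DecidableEq α] [DecidableEq β] [Fintype α] [Fintype β]
    (A : Ω → α) {f : α → β} (hf : f.Injective) : entH p (fun ω => f (A ω)) = entH p A :=
  (Fintype.sum_of_injective f hf _ _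
    (fun _ hb => by rw [pmfOf_eq_zero_of_notMem_range p A hb, Real.negMulLog_zero])
    (fun a => by rw [pmfOf_comp_of_injective p A hf])).symm

theorem entH_pair_of_factor [DecidableEq α] [DecidableEq β] [Fintype α] [Fintype β]
    (A : Ω → α) (W : Ω → β) (K : β → α → ℝ)
    (hK : ∀ a w, pmfOf p (fun ω => (A ω, W ω)) (a, w) = K w a * pmfOf p W w) :
    entH p (fun ω => (A ω, W ω)) =
      entH p W + ∑ w, pmfOf p W w * ∑ a, Real.negMulLog (K w a) := by
  -- `K` need not be normalised: marginalising `hK` gives `∑ a, K w a = 1` wherever `W = w` has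
  -- nonzero mass, and elsewhere `negMulLog 0 = 0`.
  have hmass : ∀ w,
      (∑ a, K w a) * Real.negMulLog (pmfOf p W w) = Real.negMulLog (pmfOf p W w) := by
    intro w
    have hsum : (∑ a, K w a) * pmfOf p W w = pmfOf p W w := by
      rw [Finset.sum_mul]
      exact (Finset.sum_congr rfl fun a _ => (hK a w).symm).trans (sum_pmfOf_pair p A W w)
    rcases eq_or_ne (pmfOf p W w) 0 with h0 | h0
    · rw [h0, Real.negMulLog_zero, mul_zero]
    · rw [(mul_eq_right₀ h0).1 hsum, one_mul]
  unfold entH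
  rw [Fintype.sum_prod_type, Finset.sum_comm, ← Finset.sum_add_distrib]
  refine Finset.sum_congr rfl fun w _ => ?_
  simp only [hK, Real.negMulLog_mul, Finset.sum_add_distrib, ← Finset.sum_mul, ← Finset.mul_sum,
    hmass, add_comm]

theorem cmi_comp_eq_zero [DecidableEq α] [DecidableEq β] [DecidableEq γ] [Fintype α]
    [Fintype β] [Fintype γ] (A : Ω → α) (X : Ω → β) (g : β → γ) (κ : β → α → ℝ)
    (hκ : ∀ a x, pmfOf p (fun ω => (A ω, X ω)) (a, x) = κ x a * pmfOf p X x)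
    (hg : κ.FactorsThrough g) :
    cmi p A X (fun ω => g (X ω)) = 0 := by
  set K := Function.extend g κ 0
  have hK : ∀ x, κ x = K (g x) := fun x => (hg.extend_apply 0 x).symm
  have hAg : ∀ a c, pmfOf p (fun ω => (A ω, g (X ω))) (a, c) =
      K c a * pmfOf p (fun ω => g (X ω)) c := by
    intro a c
    change pmfOf p (fun ω => Prod.map id g (A ω, X ω)) (a, c) = _
    rw [pmfOf_comp p (fun ω => (A ω, X ω)) (Prod.map id g), pmfOf_comp p X g, Finset.mul_sum,
      Fintype.sum_prod_type, Finset.sum_eq_single a (fun a' _ ha' => by simp [ha'])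
        (by simp)]
    refine Finset.sum_congr rfl fun x _ => ?_
    by_cases hx : g x = c <;> simp [hx, hκ, hK]
  have hXg := entH_comp_of_injective p X (f := fun x => (x, g x))
    fun _ _ h => (Prod.ext_iff.1 h).1
  have hAXg := entH_comp_of_injective p (fun ω => (A ω, X ω))
    (f := fun ax => (ax.1, ax.2, g ax.2))
    fun _ _ h => by simp only [Prod.mk.injEq] at h; exact Prod.ext h.1 h.2.1
  have hAX := entH_pair_of_factor p A X (fun x => K (g x)) fun a x => by rw [hκ, hK]
  have hlaw := sum_pmfOf_mul p X fun x => ∑ a, Real.negMulLog (K (g x) a)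
  have hlaw' := sum_pmfOf_mul p (fun ω => g (X ω)) fun c => ∑ a, Real.negMulLog (K c a)
  unfold cmi
  rw [entH_pair_of_factor p A _ K hAg, hXg, hAXg, hAX]
  linarith

end Entropy

section Channel

variable {Ω S β α : Type*} [Fintype Ω] [Fintype S] [DecidableEq α]

theorem pmfOf_congr_of_bijective {p : S → ℝ} {A A' : S → α} {e : S → S} (he : e.Bijective)
    (hp : ∀ s, p (e s) = p s) (hA : ∀ s, A' (e s) = A s) : pmfOf p A = pmfOf p A' :=
  funext fun a => Fintype.sum_bijective e he _ _ fun s => by rw [hp, hA]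

theorem pmfOf_channel [DecidableEq S] [DecidableEq β] [Fintype β] (p : Ω → ℝ) (V : Ω → S)
    (W : Ω → β) (f : S → β → α) (ρ : S → ℝ)
    (hρ : ∀ s w, pmfOf p (fun ω => (V ω, W ω)) (s, w) = ρ s * pmfOf p W w) (a : α) (w : β) :
    pmfOf p (fun ω => (f (V ω) (W ω), W ω)) (a, w) =
      pmfOf ρ (fun s => f s w) a * pmfOf p W w := by
  change pmfOf p (fun ω => (fun sw : S × β => (f sw.1 sw.2, sw.2)) (V ω, W ω)) (a, w) = _
  rw [pmfOf_comp p (fun ω => (V ω, W ω)) fun sw => (f sw.1 sw.2, sw.2), Fintype.sum_prod_type,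
    Finset.sum_comm, Finset.sum_eq_single w (fun w' _ hw' => by simp [hw']) (by simp)]
  simp only [Prod.mk.injEq, and_true, hρ]
  rw [pmfOf.eq_1 ρ, Finset.sum_mul]
  simp only [ite_mul, zero_mul]

end Channel

theorem exists_perm_iff_of_card_filter_eq {ι : Type*} [Fintype ι] {P Q : ι → Prop}
    [DecidablePred P] [DecidablePred Q]
    (h : (Finset.univ.filter P).card = (Finset.univ.filter Q).card) :
    ∃ τ : Equiv.Perm ι, ∀ i, P (τ i) ↔ Q i := by
  have e : {i // Q i} ≃ {i // P i} :=
    Fintype.equivOfCardEq (by rw [Fintype.card_subtype, Fintype.card_subtype, h])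
  refine ⟨e.extendSubtype, fun i => ?_⟩
  by_cases hi : Q i
  · exact iff_of_true (e.extendSubtype_mem i hi) hi
  · exact iff_of_false (e.extendSubtype_not_mem i hi) hi

theorem exists_ne_zero_mul_eq_of_eq_zero_iff {K : Type*} [Field K] {a b : K}
    (h : a = 0 ↔ b = 0) : ∃ c ≠ 0, b = c * a := by
  by_cases ha : a = 0
  · exact ⟨1, one_ne_zero, by rw [h.1 ha, ha, mul_zero]⟩
  · exact ⟨b / a, div_ne_zero (mt h.2 ha) ha, (div_mul_cancel₀ b ha).symm⟩

theorem val_ofNat_hammingDist {β : Type*} [DecidableEq β] {n : ℕ} (x y : Fin n → β) :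
    (Fin.ofNat (n + 1) (hammingDist x y) : ℕ) = hammingDist x y :=
  Nat.mod_eq_of_lt (Nat.lt_succ_of_le (hammingDist_le_card_fintype.trans_eq (Fintype.card_fin n)))

section HamDist

variable {F : Type*} [Field F] [DecidableEq F] {n : ℕ}

def hamDistMsg :
    (Fin n → F) × (Fin n → F) × Equiv.Perm (Fin n) → (Fin n → F) × (Fin n → F) →
      (Fin n → F) × (Fin n → F)
  | (r, z, σ), (x, y) =>
    (fun i => z (σ i) * (x (σ i) - r (σ i)), fun i => z (σ i) * (r (σ i) - y (σ i)))

-- `ρ` is the law of the coins `(r, z, σ)`; the hypothesis `hρ` below records that `r` and `σ`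
-- are uniform and `z` is uniform on the nowhere-zero vectors.
variable [Fintype F] {ρ : (Fin n → F) × (Fin n → F) × Equiv.Perm (Fin n) → ℝ}

theorem pmfOf_hamDistMsg_eq_of_mul
    (hρ : ∀ s s', ((∀ i, s.2.1 i ≠ 0) ↔ ∀ i, s'.2.1 i ≠ 0) → ρ s = ρ s')
    {x y x' y' : Fin n → F} (k : Fin n → F) (hk : ∀ i, k i ≠ 0)
    (hxy : ∀ i, x' i - y' i = k i * (x i - y i)) :
    pmfOf ρ (fun s => hamDistMsg s (x, y)) = pmfOf ρ (fun s => hamDistMsg s (x', y')) := by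
  refine pmfOf_congr_of_bijective
    (e := fun s => (fun i => k i * s.1 i + (x' i - k i * x i), fun i => s.2.1 i / k i, s.2.2))
    ?_ (fun s => hρ _ _ (by simp [hk])) (fun s => ?_)
  · rw [← Finite.injective_iff_bijective]
    rintro ⟨r, z, σ⟩ ⟨r', z', σ'⟩ h
    simp only [Prod.mk.injEq, funext_iff] at h
    obtain ⟨hr, hz, rfl⟩ := h
    simp only [Prod.mk.injEq, and_true, funext_iff]
    exact ⟨fun i => mul_left_cancel₀ (hk i) (add_right_cancel (hr i)),
      fun i => (div_left_inj' (hk i)).1 (hz i)⟩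
  · obtain ⟨r, z, σ⟩ := s
    simp only [hamDistMsg, Prod.mk.injEq, funext_iff]
    refine ⟨fun i => ?_, fun i => ?_⟩
    · field_simp [hk (σ i)]
      ring
    · field_simp [hk (σ i)]
      linear_combination z (σ i) * hxy (σ i)

theorem pmfOf_hamDistMsg_comp_perm
    (hρ : ∀ s s', ((∀ i, s.2.1 i ≠ 0) ↔ ∀ i, s'.2.1 i ≠ 0) → ρ s = ρ s')
    (x y : Fin n → F) (τ : Equiv.Perm (Fin n)) :
    pmfOf ρ (fun s => hamDistMsg s (x, y)) = pmfOf ρ (fun s => hamDistMsg s (x ∘ τ, y ∘ τ)) := by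
  refine pmfOf_congr_of_bijective (e := fun s => (s.1 ∘ τ, s.2.1 ∘ τ, τ⁻¹ * s.2.2))
    ?_ (fun s => hρ _ _ (τ.forall_congr_right (q := fun i => s.2.1 i ≠ 0))) (fun s => ?_)
  · rw [← Finite.injective_iff_bijective]
    rintro ⟨r, z, σ⟩ ⟨r', z', σ'⟩ h
    simp only [Prod.mk.injEq] at h
    obtain ⟨hr, hz, hσ⟩ := h
    exact Prod.ext (τ.surjective.injective_comp_right hr)
      (Prod.ext (τ.surjective.injective_comp_right hz) (mul_left_cancel hσ))
  · simp [hamDistMsg]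

theorem pmfOf_hamDistMsg_eq_of_hammingDist_eq
    (hρ : ∀ s s', ((∀ i, s.2.1 i ≠ 0) ↔ ∀ i, s'.2.1 i ≠ 0) → ρ s = ρ s')
    {x y x' y' : Fin n → F} (h : hammingDist x y = hammingDist x' y') :
    pmfOf ρ (fun s => hamDistMsg s (x, y)) = pmfOf ρ (fun s => hamDistMsg s (x', y')) := by
  obtain ⟨τ, hτ⟩ := exists_perm_iff_of_card_filter_eq h
  choose k hk hxy using fun i => exists_ne_zero_mul_eq_of_eq_zero_iff
    (a := x (τ i) - y (τ i)) (b := x' i - y' i) (by simpa [sub_eq_zero] using not_iff_not.1 (hτ i))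
  rw [pmfOf_hamDistMsg_comp_perm hρ x y τ]
  exact pmfOf_hamDistMsg_eq_of_mul hρ k hk hxy

end HamDist

theorem hamDist_privacy_charlie_general {Ω F : Type*} [Fintype Ω] [Field F] [Fintype F]
    [DecidableEq F] (n : ℕ) [DecidableEq (Equiv.Perm (Fin n))]
    (p : Ω → ℝ)
    (X Y R Z : Ω → (Fin n → F)) (Pm : Ω → Equiv.Perm (Fin n))
    (hRunif : ∀ r : Fin n → F, pmfOf p R r = 1 / (Fintype.card F : ℝ) ^ n)
    (hZunif : ∀ z : Fin n → F,
      pmfOf p Z z = if ∀ i, z i ≠ 0 then 1 / ((Fintype.card F : ℝ) - 1) ^ n else 0)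
    (hPmunif : ∀ σ : Equiv.Perm (Fin n), pmfOf p Pm σ = 1 / (Nat.factorial n : ℝ))
    (hindep : ∀ (r z : Fin n → F) (σ : Equiv.Perm (Fin n)) (x y : Fin n → F),
      pmfOf p (fun ω => (R ω, Z ω, Pm ω, X ω, Y ω)) (r, z, σ, x, y) =
        pmfOf p R r * pmfOf p Z z * pmfOf p Pm σ *
          pmfOf p (fun ω => (X ω, Y ω)) (x, y)) :
    cmi p
      (fun ω => ((fun i => Z ω (Pm ω i) * (X ω (Pm ω i) - R ω (Pm ω i))),
                 (fun i => Z ω (Pm ω i) * (R ω (Pm ω i) - Y ω (Pm ω i)))))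
      (fun ω => (X ω, Y ω))
      (fun ω => (Fin.ofNat (n+1) (hammingDist (X ω) (Y ω)) : Fin (n+1))) = 0 := by
  set ρ : (Fin n → F) × (Fin n → F) × Equiv.Perm (Fin n) → ℝ :=
    fun s => pmfOf p R s.1 * pmfOf p Z s.2.1 * pmfOf p Pm s.2.2
  have hρ : ∀ s s', ((∀ i, s.2.1 i ≠ 0) ↔ ∀ i, s'.2.1 i ≠ 0) → ρ s = ρ s' := fun s s' h => by
    simp only [ρ, hRunif, hZunif, hPmunif, h]
  have hsplit : ∀ s xy, pmfOf p (fun ω => ((R ω, Z ω, Pm ω), (X ω, Y ω))) (s, xy) =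
      ρ s * pmfOf p (fun ω => (X ω, Y ω)) xy := by
    rintro ⟨r, z, σ⟩ ⟨x, y⟩
    rw [← hindep]
    simp only [pmfOf, Prod.mk.injEq, and_assoc]
  exact cmi_comp_eq_zero p (fun ω => hamDistMsg (R ω, Z ω, Pm ω) (X ω, Y ω))
    (fun ω => (X ω, Y ω)) (fun xy => (Fin.ofNat (n+1) (hammingDist xy.1 xy.2) : Fin (n+1)))
    (fun xy => pmfOf ρ fun s => hamDistMsg s xy)
    (pmfOf_channel p _ _ hamDistMsg ρ hsplit) fun xy xy' h =>
    pmfOf_hamDistMsg_eq_of_hammingDist_eq hρ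
      (by simpa only [val_ofNat_hammingDist] using congrArg Fin.val h)

/-- Privacy against Charlie in `HamDist`: with
`A^n = π(Z^n ⊗ (X^n ⊖ R^n))` and `B^n = π(Z^n ⊗ (R^n ⊖ Y^n))`, where `R^n` is
uniform on `F^n`, `Z^n` uniform on `(F\{0})^n`, `π` uniform on permutations,
all mutually independent and independent of `(X^n, Y^n)`, we have
`I(A^n, B^n ; X^n, Y^n | d_H(X^n, Y^n)) = 0`. -/
theorem hamDist_privacy_charlie {Ω F : Type*} [Fintype Ω] [Field F] [Fintype F]
    [DecidableEq F] (n : ℕ) [DecidableEq (Equiv.Perm (Fin n))]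
    (p : Ω → ℝ) (hp0 : ∀ ω, 0 ≤ p ω) (hp1 : ∑ ω, p ω = 1)
    (X Y R Z : Ω → (Fin n → F)) (Pm : Ω → Equiv.Perm (Fin n))
    (hRunif : ∀ r : Fin n → F, pmfOf p R r = 1 / (Fintype.card F : ℝ) ^ n)
    (hZunif : ∀ z : Fin n → F,
      pmfOf p Z z = if ∀ i, z i ≠ 0 then 1 / ((Fintype.card F : ℝ) - 1) ^ n else 0)
    (hPmunif : ∀ σ : Equiv.Perm (Fin n), pmfOf p Pm σ = 1 / (Nat.factorial n : ℝ))
    (hindep : ∀ (r z : Fin n → F) (σ : Equiv.Perm (Fin n)) (x y : Fin n → F),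
      pmfOf p (fun ω => (R ω, Z ω, Pm ω, X ω, Y ω)) (r, z, σ, x, y) =
        pmfOf p R r * pmfOf p Z z * pmfOf p Pm σ *
          pmfOf p (fun ω => (X ω, Y ω)) (x, y)) :
    cmi p
      (fun ω => ((fun i => Z ω (Pm ω i) * (X ω (Pm ω i) - R ω (Pm ω i))),
                 (fun i => Z ω (Pm ω i) * (R ω (Pm ω i) - Y ω (Pm ω i)))))
      (fun ω => (X ω, Y ω))
      (fun ω => (Fin.ofNat (n+1) (hammingDist (X ω) (Y ω)) : Fin (n+1))) = 0 :=
  hamDist_privacy_charlie_general n p X Y R Z Pm hRunif hZunif hPmunif hindep
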